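/- arXiv:2106.11407 — 2 statements merged into one kernel-verified Lean document; each statement's English description precedes it below -/
import Mathlib

section
/- Let λ', μ > 0 and let G : [0,∞) → [0,1) be a strictly increasing, absolutely continuous c.d.f. with G(0) = 0, G(x) < 1 for all x, density g, finite mean ∫₀^∞ (1 − G(x)) dx < ∞, and non-increasing hazard rate h(x) = g(x)/(1 − G(x)). Then the invariant fluid queue length b ↦ q(b) = λ' ∫₀^{G⁻¹(1 − bμ/λ')} (1 − G(x)) dx is a convex function on [0, λ'/μ]. -/
/-!
Write `F t = ∫₀^{G⁻¹ t} (1 - G)`, so that `q b = λ' F (1 - bμ/λ')`; it suffices that `F` is convex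
on `[0, 1]`. Formally `F' = 1 / (h ∘ G⁻¹)`, which increases because `h` decreases. Since `g` need
not be continuous we argue with supporting lines instead: for `t = G s < 1`, comparing the hazard
rate with `h s` bounds `1 - G` by `((1 - G s) / g s) g` from above on `[0, s]` and from below on
`[s, ∞)`, and integrating shows that the line of slope `(1 - G s) / g s` through `(t, F t)` lies
below `F`.
-/

open Set MeasureTheory Filter Topology

theorem convexOn_of_exists_supporting_line {s : Set ℝ} {f : ℝ → ℝ} (hs : Convex ℝ s)
    (h : ∀ y ∈ interior s, ∃ c, ∀ u ∈ s, f y + c * (u - y) ≤ f u) : ConvexOn ℝ s f := by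
  refine convexOn_of_slope_mono_adjacent hs fun {x y z} hx hz hxy hyz => ?_
  have hy : y ∈ interior s := by
    refine interior_mono (hs.ordConnected.out hx hz) ?_
    rw [interior_Icc]
    exact ⟨hxy, hyz⟩
  obtain ⟨c, hc⟩ := h y hy
  have hleft := hc x hx
  have hright := hc z hz
  calc (f y - f x) / (y - x) ≤ c := by
        rw [div_le_iff₀ (sub_pos.2 hxy)]
        linarith
    _ ≤ (f z - f y) / (z - y) := by
        rw [le_div_iff₀ (sub_pos.2 hyz)]
        linarith

theorem exists_lt_of_integrableOn_Ici {f : ℝ → ℝ} {a ε : ℝ} (hf : IntegrableOn f (Ici a))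
    (hε : 0 < ε) : ∃ x, a ≤ x ∧ f x < ε := by
  by_contra! hge
  have hfin := hf.measure_ge_lt_top hε
  have hall : {x | ε ≤ f x} ∩ Ici a = Ici a := inter_eq_self_of_subset_right hge
  rw [Measure.restrict_apply' measurableSet_Ici, hall, Real.volume_Ici] at hfin
  exact hfin.ne rfl

theorem IntervalIntegrable.of_integrableOn_Icc_zero {g : ℝ → ℝ}
    (hg_loc : ∀ x, 0 ≤ x → IntegrableOn g (Icc 0 x)) {a b : ℝ} (ha : 0 ≤ a) (hb : 0 ≤ b) :
    IntervalIntegrable g volume a b :=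
  ((hg_loc _ (le_max_of_le_left ha)).mono_set
    (Icc_subset_Icc (le_min ha hb) le_rfl)).intervalIntegrable

section Patience

variable {G g : ℝ → ℝ}

theorem integral_density_eq_sub (hg_loc : ∀ x, 0 ≤ x → IntegrableOn g (Icc 0 x))
    (hdens : ∀ x, 0 ≤ x → G x = ∫ u in (0 : ℝ)..x, g u) {a b : ℝ} (ha : 0 ≤ a) (hb : 0 ≤ b) :
    ∫ x in a..b, g x = G b - G a := by
  rw [hdens a ha, hdens b hb, intervalIntegral.integral_interval_sub_left
    (.of_integrableOn_Icc_zero hg_loc le_rfl hb) (.of_integrableOn_Icc_zero hg_loc le_rfl ha)]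

theorem continuousOn_Icc_of_density (hg_loc : ∀ x, 0 ≤ x → IntegrableOn g (Icc 0 x))
    (hdens : ∀ x, 0 ≤ x → G x = ∫ u in (0 : ℝ)..x, g u) {b : ℝ} (hb : 0 ≤ b) :
    ContinuousOn G (Icc 0 b) := by
  have hprim := intervalIntegral.continuousOn_primitive_interval (a := 0) (b := b)
    (by rw [uIcc_of_le hb]; exact hg_loc b hb)
  rw [uIcc_of_le hb] at hprim
  exact hprim.congr fun x hx => hdens x hx.1

theorem exists_eq_of_mem_Ico_of_density (hg_loc : ∀ x, 0 ≤ x → IntegrableOn g (Icc 0 x))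
    (hdens : ∀ x, 0 ≤ x → G x = ∫ u in (0 : ℝ)..x, g u) (hG0 : G 0 = 0)
    (hmean : IntegrableOn (fun x => 1 - G x) (Ici 0)) {t : ℝ} (ht : t ∈ Ico 0 1) :
    ∃ s, 0 ≤ s ∧ G s = t := by
  obtain ⟨b, hb, hGb⟩ := exists_lt_of_integrableOn_Ici hmean (sub_pos.2 ht.2)
  obtain ⟨s, hs, hGs⟩ := intermediate_value_Icc hb (continuousOn_Icc_of_density hg_loc hdens hb)
    ⟨hG0 ▸ ht.1, by linarith⟩
  exact ⟨s, hs.1, hGs⟩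

theorem density_mul_one_sub_le (hG_lt_one : ∀ x, 0 ≤ x → G x < 1)
    (hhaz_antitone : ∀ x y, 0 ≤ x → x ≤ y → g y / (1 - G y) ≤ g x / (1 - G x))
    {x y : ℝ} (hx : 0 ≤ x) (hxy : x ≤ y) : g y * (1 - G x) ≤ g x * (1 - G y) := by
  have := hhaz_antitone x y hx hxy
  rwa [div_le_div_iff₀ (sub_pos.2 (hG_lt_one y (hx.trans hxy))) (sub_pos.2 (hG_lt_one x hx))]
    at this

theorem density_pos (hg_nonneg : ∀ x, 0 ≤ x → 0 ≤ g x)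
    (hg_loc : ∀ x, 0 ≤ x → IntegrableOn g (Icc 0 x))
    (hdens : ∀ x, 0 ≤ x → G x = ∫ u in (0 : ℝ)..x, g u)
    (hG_mono : StrictMonoOn G (Ici 0)) (hG_lt_one : ∀ x, 0 ≤ x → G x < 1)
    (hhaz_antitone : ∀ x y, 0 ≤ x → x ≤ y → g y / (1 - G y) ≤ g x / (1 - G x))
    {x : ℝ} (hx : 0 ≤ x) : 0 < g x := by
  refine (hg_nonneg x hx).lt_of_ne fun hgx => ?_
  -- a vanishing hazard rate stays zero, so `G` would be constant from `x` on
  have hzero : EqOn g 0 (uIcc x (x + 1)) := by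
    intro y hy
    rw [uIcc_of_le (by linarith)] at hy
    have hcross := density_mul_one_sub_le hG_lt_one hhaz_antitone hx hy.1
    rw [← hgx, zero_mul] at hcross
    have := sub_pos.2 (hG_lt_one x hx)
    exact le_antisymm (nonpos_of_mul_nonpos_left hcross this) (hg_nonneg y (hx.trans hy.1))
  have hflat : G (x + 1) = G x := by
    have := integral_density_eq_sub hg_loc hdens hx (by linarith : 0 ≤ x + 1)
    rw [intervalIntegral.integral_congr hzero] at this
    simp at this
    linarith
  exact (hG_mono hx (by simp; linarith) (lt_add_one x)).ne' hflat


theorem survival_mul_sub_le_density_mul_integral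
    (hg_loc : ∀ x, 0 ≤ x → IntegrableOn g (Icc 0 x))
    (hdens : ∀ x, 0 ≤ x → G x = ∫ u in (0 : ℝ)..x, g u) (hG_lt_one : ∀ x, 0 ≤ x → G x < 1)
    (hmean : IntegrableOn (fun x => 1 - G x) (Ici 0))
    (hhaz_antitone : ∀ x y, 0 ≤ x → x ≤ y → g y / (1 - G y) ≤ g x / (1 - G x))
    {s s' : ℝ} (hs : 0 ≤ s) (hs' : 0 ≤ s') :
    (1 - G s) * (G s' - G s) ≤ g s * ∫ x in s..s', (1 - G x) := by
  have hg_int {a b : ℝ} (ha : 0 ≤ a) (hb : 0 ≤ b) :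
      IntervalIntegrable (fun x => (1 - G s) * g x) volume a b :=
    (IntervalIntegrable.of_integrableOn_Icc_zero hg_loc ha hb).const_mul _
  have hsurv_int {a b : ℝ} (ha : 0 ≤ a) (hb : 0 ≤ b) :
      IntervalIntegrable (fun x => g s * (1 - G x)) volume a b :=
    ((hmean.mono_set fun x hx => (le_min ha hb).trans hx.1).intervalIntegrable).const_mul _
  rw [← integral_density_eq_sub hg_loc hdens hs hs', ← intervalIntegral.integral_const_mul,
    ← intervalIntegral.integral_const_mul]
  rcases le_total s s' with hss' | hs's
  · refine intervalIntegral.integral_mono_on hss' (hg_int hs hs') (hsurv_int hs hs') ?_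
    intro x hx
    linarith [density_mul_one_sub_le hG_lt_one hhaz_antitone hs hx.1]
  · rw [intervalIntegral.integral_symm s', intervalIntegral.integral_symm s', neg_le_neg_iff]
    refine intervalIntegral.integral_mono_on hs's (hsurv_int hs' hs) (hg_int hs' hs) ?_
    intro x hx
    linarith [density_mul_one_sub_le hG_lt_one hhaz_antitone (hs'.trans hx.1) hx.2]

end Patience

/-- `∫₀^{G⁻¹ t} (1 - G)`, written over the sublevel set `{x ≥ 0 | G x < t}` so that no inverse is
needed and `t = 1` gives the whole half-line (`G⁻¹ 1 = ∞`). -/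
noncomputable def survivalIntegral (G : ℝ → ℝ) (t : ℝ) : ℝ :=
  ∫ x in {x | 0 ≤ x ∧ G x < t}, (1 - G x)

namespace survivalIntegral

variable {G g : ℝ → ℝ}

theorem measurableSet_sublevel (hG_mono : MonotoneOn G (Ici 0)) (t : ℝ) :
    MeasurableSet {x | 0 ≤ x ∧ G x < t} :=
  OrdConnected.measurableSet ⟨fun _ ha _ hb _ hc =>
    ⟨ha.1.trans hc.1, (hG_mono (ha.1.trans hc.1) hb.1 hc.2).trans_lt hb.2⟩⟩

theorem monotone (hG_mono : MonotoneOn G (Ici 0)) (hG_lt_one : ∀ x, 0 ≤ x → G x < 1)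
    (hmean : IntegrableOn (fun x => 1 - G x) (Ici 0)) : Monotone (survivalIntegral G) := by
  intro t t' htt'
  refine setIntegral_mono_set (hmean.mono_set fun x hx => hx.1) ?_
    (Eventually.of_forall fun x hx => ⟨hx.1, hx.2.trans_le htt'⟩)
  exact ae_restrict_of_forall_mem (measurableSet_sublevel hG_mono t')
    fun x hx => sub_nonneg.2 (hG_lt_one x hx.1).le

theorem apply_eq_intervalIntegral (hG_mono : StrictMonoOn G (Ici 0)) {s : ℝ} (hs : 0 ≤ s) :
    survivalIntegral G (G s) = ∫ x in 0..s, (1 - G x) := by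
  have hset : {x | 0 ≤ x ∧ G x < G s} = Ico 0 s := by
    ext x
    exact ⟨fun hx => ⟨hx.1, hG_mono.lt_iff_lt hx.1 hs |>.1 hx.2⟩,
      fun hx => ⟨hx.1, hG_mono.lt_iff_lt hx.1 hs |>.2 hx.2⟩⟩
  rw [survivalIntegral, hset, intervalIntegral.integral_of_le hs, integral_Ico_eq_integral_Ioo,
    integral_Ioc_eq_integral_Ioo]


theorem exists_supporting_line (hg_nonneg : ∀ x, 0 ≤ x → 0 ≤ g x)
    (hg_loc : ∀ x, 0 ≤ x → IntegrableOn g (Icc 0 x))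
    (hdens : ∀ x, 0 ≤ x → G x = ∫ u in (0 : ℝ)..x, g u)
    (hG_mono : StrictMonoOn G (Ici 0)) (hG0 : G 0 = 0) (hG_lt_one : ∀ x, 0 ≤ x → G x < 1)
    (hmean : IntegrableOn (fun x => 1 - G x) (Ici 0))
    (hhaz_antitone : ∀ x y, 0 ≤ x → x ≤ y → g y / (1 - G y) ≤ g x / (1 - G x))
    {t : ℝ} (ht : t ∈ Ico 0 1) :
    ∃ c, ∀ u ∈ Icc 0 1, survivalIntegral G t + c * (u - t) ≤ survivalIntegral G u := by
  obtain ⟨s, hs, rfl⟩ := exists_eq_of_mem_Ico_of_density hg_loc hdens hG0 hmean ht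
  have hgs := density_pos hg_nonneg hg_loc hdens hG_mono hG_lt_one hhaz_antitone hs
  set c := (1 - G s) / g s
  have hbelow_one (u : ℝ) (hu : u ∈ Ico 0 1) :
      survivalIntegral G (G s) + c * (u - G s) ≤ survivalIntegral G u := by
    obtain ⟨s', hs', rfl⟩ := exists_eq_of_mem_Ico_of_density hg_loc hdens hG0 hmean hu
    have hsupp : c * (G s' - G s) ≤ ∫ x in s..s', (1 - G x) := by
      rw [div_mul_eq_mul_div, div_le_iff₀ hgs, mul_comm _ (g s)]
      exact survival_mul_sub_le_density_mul_integral hg_loc hdens hG_lt_one hmean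
        hhaz_antitone hs hs'
    have hsurv_int {a : ℝ} (ha : 0 ≤ a) : IntervalIntegrable (fun x => 1 - G x) volume 0 a :=
      (hmean.mono_set fun x hx => (le_min le_rfl ha).trans hx.1).intervalIntegrable
    rw [← intervalIntegral.integral_interval_sub_left (hsurv_int hs') (hsurv_int hs),
      ← apply_eq_intervalIntegral hG_mono hs, ← apply_eq_intervalIntegral hG_mono hs'] at hsupp
    linarith
  refine ⟨c, fun u hu => ?_⟩
  rcases hu.2.lt_or_eq with hu1 | rfl
  · exact hbelow_one u ⟨hu.1, hu1⟩
  -- at `u = 1` the slope of `survivalIntegral G` may blow up, so pass to the limit from below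
  have hline : Continuous fun u => survivalIntegral G (G s) + c * (u - G s) := by fun_prop
  refine le_of_tendsto (x := 𝓝[<] (1 : ℝ)) ((hline.tendsto 1).mono_left nhdsWithin_le_nhds) ?_
  filter_upwards [Ioo_mem_nhdsLT zero_lt_one] with u hu
  exact (hbelow_one u ⟨hu.1.le, hu.2⟩).trans
    (monotone hG_mono.monotoneOn hG_lt_one hmean hu.2.le)

theorem convexOn (hg_nonneg : ∀ x, 0 ≤ x → 0 ≤ g x)
    (hg_loc : ∀ x, 0 ≤ x → IntegrableOn g (Icc 0 x))
    (hdens : ∀ x, 0 ≤ x → G x = ∫ u in (0 : ℝ)..x, g u)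
    (hG_mono : StrictMonoOn G (Ici 0)) (hG0 : G 0 = 0) (hG_lt_one : ∀ x, 0 ≤ x → G x < 1)
    (hmean : IntegrableOn (fun x => 1 - G x) (Ici 0))
    (hhaz_antitone : ∀ x y, 0 ≤ x → x ≤ y → g y / (1 - G y) ≤ g x / (1 - G x)) :
    ConvexOn ℝ (Icc 0 1) (survivalIntegral G) := by
  refine convexOn_of_exists_supporting_line (convex_Icc 0 1) fun t ht => ?_
  rw [interior_Icc] at ht
  exact exists_supporting_line hg_nonneg hg_loc hdens hG_mono hG0 hG_lt_one hmean hhaz_antitone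
    ⟨ht.1.le, ht.2⟩

end survivalIntegral

theorem invariant_fluid_queue_length_convex_general
    (lam' mu : ℝ) (hlam : 0 < lam') (hmu : 0 < mu)
    (G g : ℝ → ℝ) (hg_nonneg : ∀ x, 0 ≤ x → 0 ≤ g x)
    (hg_loc : ∀ x, 0 ≤ x → IntegrableOn g (Icc 0 x))
    (hdens : ∀ x, 0 ≤ x → G x = ∫ u in (0 : ℝ)..x, g u)
    (hG_mono : StrictMonoOn G (Ici (0 : ℝ)))
    (hG0 : G 0 = 0) (hG_lt_one : ∀ x, 0 ≤ x → G x < 1)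
    (hmean : IntegrableOn (fun x => 1 - G x) (Ici (0 : ℝ)))
    (hhaz_antitone : ∀ x y, 0 ≤ x → x ≤ y → g y / (1 - G y) ≤ g x / (1 - G x))
    (q : ℝ → ℝ)
    (hq : ∀ b, q b = lam' * ∫ x in {x : ℝ | 0 ≤ x ∧ G x < 1 - b * mu / lam'}, (1 - G x)) :
    ConvexOn ℝ (Icc (0 : ℝ) (lam' / mu)) q := by
  have hline (b : ℝ) : AffineMap.lineMap (1 : ℝ) (1 - mu / lam') b = 1 - b * mu / lam' := by
    rw [AffineMap.lineMap_apply_ring']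
    ring
  have hmaps : Icc 0 (lam' / mu) ⊆ AffineMap.lineMap (1 : ℝ) (1 - mu / lam') ⁻¹' Icc 0 1 := by
    intro b hb
    have hb_mu : b * mu ≤ lam' := (le_div_iff₀ hmu).1 hb.2
    rw [mem_preimage, hline, mem_Icc, sub_nonneg, div_le_one hlam, sub_le_self_iff]
    exact ⟨hb_mu, div_nonneg (mul_nonneg hb.1 hmu.le) hlam.le⟩
  have hconv := ((survivalIntegral.convexOn hg_nonneg hg_loc hdens hG_mono hG0 hG_lt_one hmean
    hhaz_antitone).comp_affineMap _).smul hlam.le |>.subset hmaps (convex_Icc _ _)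
  refine hconv.congr fun b _ => ?_
  simp only [Function.comp_apply, hline, smul_eq_mul, hq, survivalIntegral]

/-- For a strictly increasing absolutely continuous patience c.d.f. `G`
with density `g`, `G(0) = 0`, `G < 1`, finite mean, and non-increasing hazard rate
`g/(1 − G)`, the invariant fluid queue length
`q(b) = λ' ∫₀^{G⁻¹(1 − bμ/λ')} (1 − G(x)) dx` is convex on `[0, λ'/μ]`.
(With the convention `G⁻¹(1) = ∞`, the integral `∫₀^{G⁻¹(t)} (1 − G)` is encoded as
the integral of `1 − G` over the set `{x ≥ 0 : G(x) < t}`.) -/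
theorem invariant_fluid_queue_length_convex
    (lam' mu : ℝ) (hlam : 0 < lam') (hmu : 0 < mu)
    (G g : ℝ → ℝ) (hg_meas : Measurable g) (hg_nonneg : ∀ x, 0 ≤ x → 0 ≤ g x)
    (hg_loc : ∀ x, 0 ≤ x → IntegrableOn g (Icc 0 x))
    (hdens : ∀ x, 0 ≤ x → G x = ∫ u in (0 : ℝ)..x, g u)
    (hG_mono : StrictMonoOn G (Ici (0 : ℝ)))
    (hG0 : G 0 = 0) (hG_lt_one : ∀ x, 0 ≤ x → G x < 1)
    (hmean : IntegrableOn (fun x => 1 - G x) (Ici (0 : ℝ)))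
    (hhaz_antitone : ∀ x y, 0 ≤ x → x ≤ y → g y / (1 - G y) ≤ g x / (1 - G x))
    (q : ℝ → ℝ)
    (hq : ∀ b, q b = lam' * ∫ x in {x : ℝ | 0 ≤ x ∧ G x < 1 - b * mu / lam'}, (1 - G x)) :
    ConvexOn ℝ (Icc (0 : ℝ) (lam' / mu)) q :=
  invariant_fluid_queue_length_convex_general lam' mu hlam hmu G g hg_nonneg hg_loc hdens hG_mono
    hG0 hG_lt_one hmean hhaz_antitone q hq
end

section
/- Let λ, μ, a, c ∈ (0,∞), let g_U : [0,1] → [0,∞) be continuous and convex, and let G be a patience-time c.d.f. on [0,∞) that is strictly increasing, absolutely continuous with density g, with G(0) = 0, G(x) < 1 for all x, finite mean, and non-increasing hazard rate h = g/(1 − G). Then the holding-cost fluid control objective F(b) = c·q(b,1) + a(λ − bμ) + g_U(b), where q(b,1) = λ ∫₀^{G⁻¹(1 − bμ/λ)} (1 − G(x)) dx, is convex and continuous on [0, min{1, λ/μ}] and attains its minimum there; i.e., there exists b_{*,hc} ∈ [0, min{1, λ/μ}] with F(b_{*,hc}) ≤ F(b) for all b in the interval. -/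
/-!
With `t = 1 - bμ/λ` the objective is `λ (c Q(t) + a t) + g_U(b)`, where
`Q(t) = ∫₀^{G⁻¹ t} (1 - G)`, so everything reduces to convexity and continuity of `Q` on `[0,1]`.
The increment of `Q` over `[u,v]` is the integral of `1 - G` over the layer `G⁻¹[u,v)`, whose
`g`-mass is `v - u`. Hence the slopes of `Q` are `g`-weighted means of `1/h = (1 - G)/g` over
consecutive layers, and they increase because `h` does not. Continuity of `Q` is dominated
convergence, and the minimum exists by compactness.
-/

open Set MeasureTheory Filter Topology

noncomputable section

def sublevel (G : ℝ → ℝ) (t : ℝ) : Set ℝ := {x | 0 ≤ x ∧ G x < t}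

/-- `𝔼[min(X, G⁻¹ t)] = ∫₀^{G⁻¹ t} (1 - G)` for `X ∼ G`, with `G⁻¹ 1 = ∞`; the fluid queue length is
`q(b,1) = λ · truncatedMean G (1 - bμ/λ)`. -/
def truncatedMean (G : ℝ → ℝ) (t : ℝ) : ℝ := ∫ x in sublevel G t, (1 - G x)

end

theorem setIntegral_mul_setIntegral_le_of_forall {α : Type*} [MeasurableSpace α] {μ : Measure α}
    {f w : α → ℝ} {A B : Set α} (hA : MeasurableSet A) (hB : MeasurableSet B)
    (hfA : IntegrableOn f A μ) (hfB : IntegrableOn f B μ) (hwA : IntegrableOn w A μ)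
    (hwB : IntegrableOn w B μ) (h : ∀ p ∈ A, ∀ q ∈ B, w q * f p ≤ f q * w p) :
    (∫ p in A, f p ∂μ) * ∫ q in B, w q ∂μ ≤ (∫ q in B, f q ∂μ) * ∫ p in A, w p ∂μ := by
  have inner : ∀ q ∈ B, w q * ∫ p in A, f p ∂μ ≤ f q * ∫ p in A, w p ∂μ := fun q hq => by
    rw [← integral_const_mul, ← integral_const_mul]
    exact setIntegral_mono_on (hfA.const_mul _) (hwA.const_mul _) hA fun p hp => h p hp q hq
  have outer := setIntegral_mono_on (hwB.mul_const _) (hfB.mul_const _) hB inner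
  rw [integral_mul_const, integral_mul_const] at outer
  linarith

theorem ConvexOn.comp_mul_add {f : ℝ → ℝ} {s : Set ℝ} (hf : ConvexOn ℝ s f) (m k : ℝ) :
    ConvexOn ℝ ((fun x => m * x + k) ⁻¹' s) fun x => f (m * x + k) :=
  hf.comp_affineMap ((LinearMap.mulLeft ℝ m).toAffineMap + AffineMap.const ℝ ℝ k)

theorem neg_div_mul_add_one_mem_Icc {lam mu b : ℝ} (hlam : 0 < lam) (hmu : 0 < mu)
    (hb : b ∈ Icc 0 (lam / mu)) : -(mu / lam) * b + 1 ∈ Icc (0 : ℝ) 1 := by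
  have hle : mu / lam * b ≤ 1 := by
    rw [div_mul_eq_mul_div, div_le_one hlam]
    linarith [(le_div_iff₀ hmu).1 hb.2]
  have hnn : 0 ≤ mu / lam * b := mul_nonneg (div_nonneg hmu.le hlam.le) hb.1
  constructor <;> linarith

section Sublevel

variable {G : ℝ → ℝ}

theorem sublevel_subset_Ici (t : ℝ) : sublevel G t ⊆ Ici 0 := fun _ hx => hx.1

theorem sublevel_mono : Monotone (sublevel G) := fun _ _ hst _ hx => ⟨hx.1, hx.2.trans_le hst⟩

theorem measurableSet_sublevel (hmono : MonotoneOn G (Ici 0)) (t : ℝ) :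
    MeasurableSet (sublevel G t) :=
  OrdConnected.measurableSet ⟨fun _ hp _ hr _ hy =>
    ⟨hp.1.trans hy.1, (hmono (hp.1.trans hy.1) hr.1 hy.2).trans_lt hr.2⟩⟩

theorem sublevel_apply (hmono : StrictMonoOn G (Ici 0)) {m : ℝ} (hm : 0 ≤ m) :
    sublevel G (G m) = Ico 0 m := by
  ext x
  exact ⟨fun hx => ⟨hx.1, (hmono.lt_iff_lt hx.1 hm).1 hx.2⟩, fun hx => ⟨hx.1, hmono hx.1 hm hx.2⟩⟩

theorem sublevel_one (hmono : ∀ x, 0 ≤ x → G x < 1) : sublevel G 1 = Ici 0 :=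
  (sublevel_subset_Ici 1).antisymm fun x hx => ⟨hx, hmono x hx⟩

theorem le_of_mem_sublevel_of_mem_diff (hmono : MonotoneOn G (Ici 0)) {s t p q : ℝ}
    (hp : p ∈ sublevel G s) (hq : q ∈ sublevel G t \ sublevel G s) : p ≤ q :=
  (hmono.reflect_lt hp.1 hq.1.1 (hp.2.trans_le (not_lt.1 fun h => hq.2 ⟨hq.1.1, h⟩))).le

theorem continuous_setIntegral_sublevel (hmono : StrictMonoOn G (Ici 0)) {f : ℝ → ℝ}
    (hf : IntegrableOn f (Ici 0)) : Continuous fun t => ∫ x in sublevel G t, f x := by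
  have hS := measurableSet_sublevel hmono.monotoneOn
  have heq : (fun t => ∫ x in sublevel G t, f x) =
      fun t => ∫ x in Ici 0, (sublevel G t).indicator f x := funext fun t => by
    rw [setIntegral_indicator (hS t), inter_eq_right.2 (sublevel_subset_Ici t)]
  rw [heq, continuous_iff_continuousAt]
  intro t₀
  refine continuousAt_of_dominated (bound := fun x => ‖f x‖)
    (Eventually.of_forall fun t => hf.aestronglyMeasurable.indicator (hS t))
    (Eventually.of_forall fun t => Eventually.of_forall fun x => norm_indicator_le_norm_self _ _)
    hf.norm ?_
  -- away from the null level set `{G = t₀}`, membership in `sublevel G t` is locally constant in `t`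
  have hnull : volume {x | 0 ≤ x ∧ G x = t₀} = 0 :=
    Subsingleton.measure_zero (fun p hp q hq => hmono.injOn hp.1 hq.1 (hp.2.trans hq.2.symm)) _
  filter_upwards [ae_restrict_of_ae (measure_eq_zero_iff_ae_notMem.1 hnull)] with x hx
  have hev : ∀ᶠ t in 𝓝 t₀, (x ∈ sublevel G t ↔ x ∈ sublevel G t₀) := by
    by_cases h0 : 0 ≤ x
    · rcases lt_or_gt_of_ne fun h => hx ⟨h0, h⟩ with hlt | hgt
      · filter_upwards [Ioi_mem_nhds hlt] with t ht
        exact iff_of_true ⟨h0, ht⟩ ⟨h0, hlt⟩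
      · filter_upwards [Iio_mem_nhds hgt] with t ht
        exact iff_of_false (fun h => h.2.not_gt ht) fun h => h.2.not_gt hgt
    · exact Eventually.of_forall fun t => iff_of_false (fun h => h0 h.1) fun h => h0 h.1
  refine (continuousAt_const (y := (sublevel G t₀).indicator f x)).congr (hev.mono fun t ht => ?_)
  by_cases h : x ∈ sublevel G t₀ <;> simp [h, ht]

theorem truncatedMean_sub_truncatedMean (hmono : MonotoneOn G (Ici 0))
    (hint : IntegrableOn (fun x => 1 - G x) (Ici 0)) {u v : ℝ} (huv : u ≤ v) :
    truncatedMean G v - truncatedMean G u = ∫ x in sublevel G v \ sublevel G u, (1 - G x) :=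
  (setIntegral_sdiff (measurableSet_sublevel hmono u) (hint.mono_set (sublevel_subset_Ici v))
    (sublevel_mono huv)).symm

end Sublevel

section Density

variable {G g : ℝ → ℝ}

theorem exists_lt_of_integrableOn_one_sub (hint : IntegrableOn (fun x => 1 - G x) (Ici 0))
    {s : ℝ} (hs : s < 1) : ∃ x, 0 ≤ x ∧ s < G x := by
  by_contra! h
  have hconst : IntegrableOn (fun _ => 1 - s) (Ici (0 : ℝ)) :=
    hint.mono' aestronglyMeasurable_const <| (ae_restrict_iff' measurableSet_Ici).2 <|
      Eventually.of_forall fun x hx => by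
        rw [Real.norm_of_nonneg (by linarith)]
        linarith [h x hx]
  simp only [ne_eq, enorm_ne_top, not_false_eq_true, integrableOn_const_iff, enorm_eq_zero,
    Real.volume_Ici, lt_self_iff_false, or_false] at hconst
  linarith

theorem tendsto_atTop_one_of_integrableOn_one_sub (hmono : MonotoneOn G (Ici 0))
    (hlt : ∀ x, 0 ≤ x → G x < 1) (hint : IntegrableOn (fun x => 1 - G x) (Ici 0)) :
    Tendsto G atTop (𝓝 1) := by
  refine tendsto_order.2 ⟨fun s hs => ?_, fun s hs => ?_⟩
  · obtain ⟨x, hx, hsx⟩ := exists_lt_of_integrableOn_one_sub hint hs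
    filter_upwards [eventually_ge_atTop x] with y hy
    exact hsx.trans_le (hmono hx (hx.trans hy) hy)
  · filter_upwards [eventually_ge_atTop 0] with y hy
    exact (hlt y hy).trans hs

theorem continuousOn_Icc_of_eq_intervalIntegral (hg : ∀ x, 0 ≤ x → IntegrableOn g (Icc 0 x))
    (hGg : ∀ x, 0 ≤ x → G x = ∫ u in (0 : ℝ)..x, g u) {b : ℝ} (hb : 0 ≤ b) :
    ContinuousOn G (Icc 0 b) := by
  have h := intervalIntegral.continuousOn_primitive_interval (μ := volume) (a := 0) (b := b)
    (f := g) (by rw [uIcc_of_le hb]; exact hg b hb)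
  rw [uIcc_of_le hb] at h
  exact h.congr fun x hx => hGg x hx.1

theorem Ico_subset_image_Ici (hcont : ∀ b, 0 ≤ b → ContinuousOn G (Icc 0 b)) (hG0 : G 0 = 0)
    (hint : IntegrableOn (fun x => 1 - G x) (Ici 0)) : Ico 0 1 ⊆ G '' Ici 0 := by
  intro s hs
  obtain ⟨x, hx, hsx⟩ := exists_lt_of_integrableOn_one_sub hint hs.2
  obtain ⟨m, hm, hGm⟩ := intermediate_value_Icc hx (hcont x hx) ⟨by rw [hG0]; exact hs.1, hsx.le⟩
  exact ⟨m, hm.1, hGm⟩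

theorem integrableOn_Ici_and_integral_eq_one (hg0 : ∀ x, 0 ≤ x → 0 ≤ g x)
    (hg : ∀ x, 0 ≤ x → IntegrableOn g (Icc 0 x)) (hGg : ∀ x, 0 ≤ x → G x = ∫ u in (0 : ℝ)..x, g u)
    (hlim : Tendsto G atTop (𝓝 1)) : IntegrableOn g (Ici 0) ∧ ∫ x in Ici 0, g x = 1 := by
  have hlimℕ : Tendsto (fun n : ℕ => ∫ u in (0 : ℝ)..n, g u) atTop (𝓝 1) :=
    (hlim.comp tendsto_natCast_atTop_atTop).congr fun n => hGg n n.cast_nonneg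
  have hnorm : ∀ n : ℕ, ∫ u in (0 : ℝ)..n, ‖g u‖ = ∫ u in (0 : ℝ)..n, g u := fun n =>
    intervalIntegral.integral_congr fun x hx => by
      rw [uIcc_of_le n.cast_nonneg] at hx
      exact Real.norm_of_nonneg (hg0 x hx.1)
  have hIoi : IntegrableOn g (Ioi 0) := integrableOn_Ioi_of_intervalIntegral_norm_tendsto 1 0
    (b := fun n : ℕ => (n : ℝ))
    (fun n => (hg n n.cast_nonneg).mono_set Ioc_subset_Icc_self) tendsto_natCast_atTop_atTop
    (by simpa only [hnorm] using hlimℕ)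
  rw [integrableOn_Ici_iff_integrableOn_Ioi, integral_Ici_eq_integral_Ioi]
  exact ⟨hIoi, tendsto_nhds_unique
    (intervalIntegral_tendsto_integral_Ioi 0 hIoi tendsto_natCast_atTop_atTop) hlimℕ⟩

theorem setIntegral_Ico_zero_eq (hGg : ∀ x, 0 ≤ x → G x = ∫ u in (0 : ℝ)..x, g u) {m : ℝ}
    (hm : 0 ≤ m) : ∫ x in Ico 0 m, g x = G m := by
  rw [setIntegral_congr_set Ico_ae_eq_Ioc, ← intervalIntegral.integral_of_le hm, hGg m hm]

theorem setIntegral_sublevel_density (hg0 : ∀ x, 0 ≤ x → 0 ≤ g x)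
    (hg : ∀ x, 0 ≤ x → IntegrableOn g (Icc 0 x)) (hGg : ∀ x, 0 ≤ x → G x = ∫ u in (0 : ℝ)..x, g u)
    (hmono : StrictMonoOn G (Ici 0)) (hG0 : G 0 = 0) (hlt : ∀ x, 0 ≤ x → G x < 1)
    (hint : IntegrableOn (fun x => 1 - G x) (Ici 0)) {t : ℝ} (ht : t ∈ Icc 0 1) :
    ∫ x in sublevel G t, g x = t := by
  rcases ht.2.lt_or_eq with ht1 | rfl
  · obtain ⟨m, hm, rfl⟩ := Ico_subset_image_Ici
      (fun b => continuousOn_Icc_of_eq_intervalIntegral hg hGg) hG0 hint ⟨ht.1, ht1⟩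
    rw [sublevel_apply hmono hm, setIntegral_Ico_zero_eq hGg hm]
  · rw [sublevel_one hlt]
    exact (integrableOn_Ici_and_integral_eq_one hg0 hg hGg
      (tendsto_atTop_one_of_integrableOn_one_sub hmono.monotoneOn hlt hint)).2

theorem convexOn_truncatedMean (hg0 : ∀ x, 0 ≤ x → 0 ≤ g x)
    (hg : ∀ x, 0 ≤ x → IntegrableOn g (Icc 0 x)) (hGg : ∀ x, 0 ≤ x → G x = ∫ u in (0 : ℝ)..x, g u)
    (hmono : StrictMonoOn G (Ici 0)) (hG0 : G 0 = 0) (hlt : ∀ x, 0 ≤ x → G x < 1)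
    (hint : IntegrableOn (fun x => 1 - G x) (Ici 0))
    (hhaz : ∀ x y, 0 ≤ x → x ≤ y → g y / (1 - G y) ≤ g x / (1 - G x)) :
    ConvexOn ℝ (Icc 0 1) (truncatedMean G) := by
  have hS := measurableSet_sublevel hmono.monotoneOn
  have hgint := (integrableOn_Ici_and_integral_eq_one hg0 hg hGg
    (tendsto_atTop_one_of_integrableOn_one_sub hmono.monotoneOn hlt hint)).1
  have hmass : ∀ {u v}, u ∈ Icc (0 : ℝ) 1 → v ∈ Icc (0 : ℝ) 1 → u ≤ v →
      ∫ x in sublevel G v \ sublevel G u, g x = v - u := fun hu hv huv => by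
    rw [setIntegral_sdiff (hS _) (hgint.mono_set (sublevel_subset_Ici _)) (sublevel_mono huv),
      setIntegral_sublevel_density hg0 hg hGg hmono hG0 hlt hint hv,
      setIntegral_sublevel_density hg0 hg hGg hmono hG0 hlt hint hu]
  refine convexOn_of_slope_mono_adjacent (convex_Icc 0 1) fun {x y z} hx hz hxy hyz => ?_
  have hy : y ∈ Icc (0 : ℝ) 1 := ⟨hx.1.trans hxy.le, hyz.le.trans hz.2⟩
  rw [div_le_div_iff₀ (sub_pos.2 hxy) (sub_pos.2 hyz),
    truncatedMean_sub_truncatedMean hmono.monotoneOn hint hxy.le,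
    truncatedMean_sub_truncatedMean hmono.monotoneOn hint hyz.le,
    ← hmass hx hy hxy.le, ← hmass hy hz hyz.le]
  have hsub : ∀ s t, sublevel G t \ sublevel G s ⊆ Ici 0 :=
    fun s t => sdiff_subset.trans (sublevel_subset_Ici t)
  refine setIntegral_mul_setIntegral_le_of_forall ((hS y).diff (hS x)) ((hS z).diff (hS y))
    (hint.mono_set (hsub x y)) (hint.mono_set (hsub y z)) (hgint.mono_set (hsub x y))
    (hgint.mono_set (hsub y z)) fun p hp q hq => ?_
  have hpq := le_of_mem_sublevel_of_mem_diff hmono.monotoneOn hp.1 hq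
  have hhpq := hhaz p q hp.1.1 hpq
  rw [div_le_div_iff₀ (sub_pos.2 (hlt q (hp.1.1.trans hpq))) (sub_pos.2 (hlt p hp.1.1))] at hhpq
  linarith

end Density

theorem holding_cost_fluid_control_attains_min_general
    (lam mu a c : ℝ) (hlam : 0 < lam) (hmu : 0 < mu) (hc : 0 < c)
    (gU : ℝ → ℝ)
    (hg_cont : ContinuousOn gU (Icc (0 : ℝ) 1))
    (hg_conv : ConvexOn ℝ (Icc (0 : ℝ) 1) gU)
    (G g : ℝ → ℝ) (hg0 : ∀ x, 0 ≤ x → 0 ≤ g x)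
    (hg_loc : ∀ x, 0 ≤ x → IntegrableOn g (Icc 0 x))
    (hdens : ∀ x, 0 ≤ x → G x = ∫ u in (0 : ℝ)..x, g u)
    (hG_mono : StrictMonoOn G (Ici (0 : ℝ)))
    (hG0 : G 0 = 0) (hG_lt_one : ∀ x, 0 ≤ x → G x < 1)
    (hmean : IntegrableOn (fun x => 1 - G x) (Ici (0 : ℝ)))
    (hhaz_antitone : ∀ x y, 0 ≤ x → x ≤ y → g y / (1 - G y) ≤ g x / (1 - G x))
    (q1 : ℝ → ℝ)
    (hq1 : ∀ b, q1 b = lam * ∫ x in {x : ℝ | 0 ≤ x ∧ G x < 1 - b * mu / lam}, (1 - G x))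
    (F : ℝ → ℝ) (hF : ∀ b, F b = c * q1 b + a * (lam - b * mu) + gU b) :
    ConvexOn ℝ (Icc (0 : ℝ) (min 1 (lam / mu))) F ∧
    ContinuousOn F (Icc (0 : ℝ) (min 1 (lam / mu))) ∧
    ∃ bstar ∈ Icc (0 : ℝ) (min 1 (lam / mu)),
      ∀ b ∈ Icc (0 : ℝ) (min 1 (lam / mu)), F bstar ≤ F b := by
  set D := Icc (0 : ℝ) (min 1 (lam / mu))
  have hD : D ⊆ Icc 0 1 := Icc_subset_Icc le_rfl (min_le_left _ _)
  have hmaps : D ⊆ (fun b => -(mu / lam) * b + 1) ⁻¹' Icc 0 1 := fun b hb =>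
    neg_div_mul_add_one_mem_Icc hlam hmu ⟨hb.1, hb.2.trans (min_le_right _ _)⟩
  set φ : ℝ → ℝ := fun t => c * truncatedMean G t + a * t
  have hFφ : F = fun b => lam * φ (-(mu / lam) * b + 1) + gU b := by
    funext b
    rw [hF, hq1, show -(mu / lam) * b + 1 = 1 - b * mu / lam by ring]
    simp only [φ, truncatedMean, sublevel]
    field_simp
  have hφconv : ConvexOn ℝ (Icc 0 1) φ :=
    ((convexOn_truncatedMean hg0 hg_loc hdens hG_mono hG0 hG_lt_one hmean hhaz_antitone).smul
      hc.le).add ((LinearMap.mulLeft ℝ a).convexOn (convex_Icc 0 1))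
  have hQcont : Continuous (truncatedMean G) := continuous_setIntegral_sublevel hG_mono hmean
  have hconv : ConvexOn ℝ D F := by
    rw [hFφ]
    exact (((hφconv.comp_mul_add _ _).subset hmaps (convex_Icc _ _)).smul hlam.le).add
      (hg_conv.subset hD (convex_Icc _ _))
  have hcont : ContinuousOn F D := by
    rw [hFφ]
    exact (by fun_prop : Continuous fun b => lam * φ (-(mu / lam) * b + 1)).continuousOn.add
      (hg_cont.mono hD)
  obtain ⟨b, hb, hmin⟩ :=
    isCompact_Icc.exists_isMinOn ⟨0, le_rfl, le_min zero_le_one (by positivity)⟩ hcont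
  exact ⟨hconv, hcont, b, hb, fun b' hb' => hmin hb'⟩

/-- With `g_U` continuous and convex on `[0,1]` and a strictly
increasing, absolutely continuous patience c.d.f. `G` with density `g`, `G(0) = 0`,
`G < 1`, finite mean, and non-increasing hazard rate, the holding-cost fluid control
objective `F(b) = c·q(b,1) + a(λ − bμ) + g_U(b)`, where
`q(b,1) = λ ∫₀^{G⁻¹(1 − bμ/λ)} (1 − G(x)) dx` (encoded with the convention
`G⁻¹(1) = ∞` as an integral over `{x ≥ 0 : G(x) < 1 − bμ/λ}`), is convex and
continuous on `[0, min {1, λ/μ}]` and attains its minimum there. -/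
theorem holding_cost_fluid_control_attains_min
    (lam mu a c : ℝ) (hlam : 0 < lam) (hmu : 0 < mu) (ha : 0 < a) (hc : 0 < c)
    (gU : ℝ → ℝ) (hg_nonneg : ∀ b ∈ Icc (0 : ℝ) 1, 0 ≤ gU b)
    (hg_cont : ContinuousOn gU (Icc (0 : ℝ) 1))
    (hg_conv : ConvexOn ℝ (Icc (0 : ℝ) 1) gU)
    (G g : ℝ → ℝ) (hg_meas : Measurable g) (hg0 : ∀ x, 0 ≤ x → 0 ≤ g x)
    (hg_loc : ∀ x, 0 ≤ x → IntegrableOn g (Icc 0 x))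
    (hdens : ∀ x, 0 ≤ x → G x = ∫ u in (0 : ℝ)..x, g u)
    (hG_mono : StrictMonoOn G (Ici (0 : ℝ)))
    (hG0 : G 0 = 0) (hG_lt_one : ∀ x, 0 ≤ x → G x < 1)
    (hmean : IntegrableOn (fun x => 1 - G x) (Ici (0 : ℝ)))
    (hhaz_antitone : ∀ x y, 0 ≤ x → x ≤ y → g y / (1 - G y) ≤ g x / (1 - G x))
    (q1 : ℝ → ℝ)
    (hq1 : ∀ b, q1 b = lam * ∫ x in {x : ℝ | 0 ≤ x ∧ G x < 1 - b * mu / lam}, (1 - G x))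
    (F : ℝ → ℝ) (hF : ∀ b, F b = c * q1 b + a * (lam - b * mu) + gU b) :
    ConvexOn ℝ (Icc (0 : ℝ) (min 1 (lam / mu))) F ∧
    ContinuousOn F (Icc (0 : ℝ) (min 1 (lam / mu))) ∧
    ∃ bstar ∈ Icc (0 : ℝ) (min 1 (lam / mu)),
      ∀ b ∈ Icc (0 : ℝ) (min 1 (lam / mu)), F bstar ≤ F b :=
  holding_cost_fluid_control_attains_min_general lam mu a c hlam hmu hc gU hg_cont hg_conv G g hg0
    hg_loc hdens hG_mono hG0 hG_lt_one hmean hhaz_antitone q1 hq1 F hF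
end
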